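/- Let τ be a nonempty set, p ∈ [1,∞], and φ : τ → τ such that there exists N ∈ ℕ with card(φ⁻¹({α})) ≤ N for all α ∈ τ. Then σ_φ↾ℓ^p(τ) is a generalized derivation — i.e., there exists a derivation d : ℓ^p(τ) → ℓ^p(τ) with σ_φ(xy) = σ_φ(x)·y + x·d(y) for all x, y ∈ ℓ^p(τ) — if and only if φ = id_τ. -/

import Mathlib

open scoped ENNReal

/-!
If `σ_φ(xy) = σ_φ(x) y + x d(y)` with `d` a derivation, test it on the idempotent
`e = 𝟙_{φ β}`. A derivation of a commutative ring kills idempotents, so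
`σ_φ(e) = σ_φ(e) e`; evaluating at `β`, where `σ_φ(e)` equals `1`, forces `e β = 1`,
that is `φ β = β`. Conversely, for `φ = id` the zero derivation works.
-/

theorem IsIdempotentElem.eq_zero_of_eq_mul_add_mul {R : Type*} [CommRing R] {e a : R}
    (he : IsIdempotentElem e) (ha : a = a * e + e * a) : a = 0 := by
  have hea : e * a = 0 := by
    have h : e * a = e * a + e * a := by
      calc e * a = e * (a * e + e * a) := by rw [← ha]
        _ = e * a + e * a := by linear_combination (2 * a) * he.eq
    simpa using h
  simpa [hea, mul_comm a e] using ha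

theorem Pi.isIdempotentElem_single_one {ι R : Type*} [DecidableEq ι] [MulZeroOneClass R]
    (i : ι) : IsIdempotentElem (Pi.single i 1 : ι → R) := by
  simpa [IsIdempotentElem] using (Pi.single_mul (α := fun _ : ι => R) i 1 1).symm

theorem stmt_14_general (τ : Type*) (p : ℝ≥0∞)
    (φ : τ → τ)
    (S : lp (fun _ : τ => ℂ) p → lp (fun _ : τ => ℂ) p)
    (hS : ∀ x : lp (fun _ : τ => ℂ) p, ∀ α : τ, S x α = x (φ α)) :
    (∃ d : lp (fun _ : τ => ℂ) p →ₗ[ℂ] lp (fun _ : τ => ℂ) p,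
        (∀ x y z : lp (fun _ : τ => ℂ) p, (⇑z = ⇑x * ⇑y) →
          ⇑(d z) = ⇑(d x) * ⇑y + ⇑x * ⇑(d y)) ∧
        (∀ x y z : lp (fun _ : τ => ℂ) p, (⇑z = ⇑x * ⇑y) →
          ⇑(S z) = ⇑(S x) * ⇑y + ⇑x * ⇑(d y))) ↔
      φ = id := by
  classical
  constructor
  · rintro ⟨d, hd, hSd⟩
    funext β
    set e : lp (fun _ : τ => ℂ) p := lp.single p (φ β) 1
    have he : IsIdempotentElem (⇑e) := Pi.isIdempotentElem_single_one (φ β)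
    have hde : ⇑(d e) = 0 := he.eq_zero_of_eq_mul_add_mul (hd e e e he.eq.symm)
    have hSe : S e β = S e β * e β := by
      simpa [hde] using congrFun (hSd e e e he.eq.symm) β
    by_contra hβ
    simp only [hS, e, lp.coeFn_single, Pi.single_eq_same, one_mul] at hSe
    exact one_ne_zero (hSe.trans (Pi.single_eq_of_ne (Ne.symm hβ) 1))
  · rintro rfl
    have hSid : ∀ w, ⇑(S w) = ⇑w := fun w => funext fun γ => hS w γ
    refine ⟨0, fun x y z _ => ?_, fun x y z hz => ?_⟩
    · simp only [LinearMap.zero_apply, lp.coeFn_zero]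
      ring
    · simp only [hSid, hz, LinearMap.zero_apply, lp.coeFn_zero]
      ring

/-- The generalized shift `σ_φ↾ℓ^p(τ)` is a generalized derivation (there exists a
derivation `d` with `σ_φ(xy) = σ_φ(x)·y + x·d(y)`) if and only if `φ = id`. -/
theorem stmt_14 (τ : Type*) [Nonempty τ] (p : ℝ≥0∞) [Fact (1 ≤ p)]
    (φ : τ → τ) (N : ℕ) (hφ : ∀ α : τ, (φ ⁻¹' {α}).encard ≤ N)
    (S : lp (fun _ : τ => ℂ) p → lp (fun _ : τ => ℂ) p)
    (hS : ∀ x : lp (fun _ : τ => ℂ) p, ∀ α : τ, S x α = x (φ α)) :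
    (∃ d : lp (fun _ : τ => ℂ) p →ₗ[ℂ] lp (fun _ : τ => ℂ) p,
        (∀ x y z : lp (fun _ : τ => ℂ) p, (⇑z = ⇑x * ⇑y) →
          ⇑(d z) = ⇑(d x) * ⇑y + ⇑x * ⇑(d y)) ∧
        (∀ x y z : lp (fun _ : τ => ℂ) p, (⇑z = ⇑x * ⇑y) →
          ⇑(S z) = ⇑(S x) * ⇑y + ⇑x * ⇑(d y))) ↔
      φ = id :=
  stmt_14_general τ p φ S hS
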